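/- Under the coupled-dynamics setup, let R > 0 satisfy R ≤ (4/27)(1 − ‖A'_{t₀}‖)/(‖H‖³ b_max²) − α. Then for every Δt ∈ ℕ with 0 ≤ Δt ≤ R/α, the maximum deviation in b satisfies the linear-in-time bound ε_b(Δt) ≤ (α b_max / (2R)) · Δt. -/

import Mathlib

/-! Write `d k = ‖b (t₀+k) - b' (t₀+k)‖` and `e k = ‖A (t₀+k) - A' t₀‖`. Since `b'` is driven by
the fixed matrix `A' t₀`, `d (k+1) ≤ ‖A' t₀‖ d k + e k ‖b (t₀+k)‖` and
`e (k+1) ≤ e k + α ‖H‖³ ‖b (t₀+k+1)‖ ‖b (t₀+k)‖`. While `d k ≤ c k` with `c = α b_max / (2R)` and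
`k ≤ R/α`, the exact trajectory stays below `M = 3/2 b_max`, so `e k ≤ α ‖H‖³ M² k`; the
threshold on `R` gives `α ‖H‖³ M³ ≤ (1 - ‖A' t₀‖) c`, which makes
`e k ‖b (t₀+k)‖ ≤ (1 - ‖A' t₀‖) c k` and closes the induction. -/

open Matrix Finset

/-- The spectral norm (ℓ²-operator norm) of a real square matrix. -/
noncomputable def specNorm {n : ℕ} (A : Matrix (Fin n) (Fin n) ℝ) : ℝ :=
  ‖Matrix.toEuclideanCLM (𝕜 := ℝ) A‖

/-- The Euclidean norm of a real vector. -/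
noncomputable def evNorm {n : ℕ} (v : Fin n → ℝ) : ℝ :=
  Real.sqrt (∑ i, v i ^ 2)

/-- `ε_A(Δt) = max_{t₀ ≤ τ ≤ t₀+Δt} ‖A_τ − A'_{t₀}‖` (spectral norm). -/
noncomputable def epsA {n : ℕ} (t₀ : ℕ)
    (A A' : ℕ → Matrix (Fin n) (Fin n) ℝ) (Δt : ℕ) : ℝ :=
  (Finset.Icc t₀ (t₀ + Δt)).sup'
    (Finset.nonempty_Icc.mpr (Nat.le_add_right _ _))
    (fun τ => specNorm (A τ - A' t₀))

/-- `ε_b(Δt) = max_{t₀ ≤ τ ≤ t₀+Δt} ‖b_τ − b'_τ‖` (Euclidean norm). -/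
noncomputable def epsB {n : ℕ} (t₀ : ℕ)
    (b b' : ℕ → (Fin n → ℝ)) (Δt : ℕ) : ℝ :=
  (Finset.Icc t₀ (t₀ + Δt)).sup'
    (Finset.nonempty_Icc.mpr (Nat.le_add_right _ _))
    (fun τ => evNorm (b τ - b' τ))

open scoped Matrix.Norms.L2Operator

section Norms

variable {n : ℕ}

lemma specNorm_eq_norm (A : Matrix (Fin n) (Fin n) ℝ) : specNorm A = ‖A‖ := rfl

lemma evNorm_eq_norm (v : Fin n → ℝ) : evNorm v = ‖WithLp.toLp 2 v‖ := by
  simp [evNorm, EuclideanSpace.norm_eq, sq_abs]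

lemma specNorm_nonneg (A : Matrix (Fin n) (Fin n) ℝ) : 0 ≤ specNorm A := norm_nonneg _

lemma evNorm_nonneg (v : Fin n → ℝ) : 0 ≤ evNorm v := Real.sqrt_nonneg _

lemma evNorm_le_add_evNorm_sub (x x' : Fin n → ℝ) : evNorm x ≤ evNorm x' + evNorm (x - x') := by
  simp only [evNorm_eq_norm, WithLp.toLp_sub]
  exact norm_le_insert' _ _

lemma evNorm_mulVec_le (A : Matrix (Fin n) (Fin n) ℝ) (v : Fin n → ℝ) :
    evNorm (A *ᵥ v) ≤ specNorm A * evNorm v := by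
  simpa [evNorm_eq_norm, specNorm_eq_norm] using A.l2_opNorm_mulVec (WithLp.toLp 2 v)

lemma specNorm_vecMulVec (u v : Fin n → ℝ) :
    specNorm (vecMulVec u v) = evNorm u * evNorm v := by
  have hrankOne := InnerProductSpace.symm_toEuclideanLin_rankOne (𝕜 := ℝ)
    (WithLp.toLp 2 u) (WithLp.toLp 2 v)
  simp only [star_trivial] at hrankOne
  rw [specNorm_eq_norm, l2_opNorm_def, ← hrankOne, LinearEquiv.trans_apply,
    LinearEquiv.apply_symm_apply]
  have hcoe : LinearMap.toContinuousLinearMap (InnerProductSpace.rankOne ℝ (WithLp.toLp 2 u)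
      (WithLp.toLp 2 v) : EuclideanSpace ℝ (Fin n) →ₗ[ℝ] EuclideanSpace ℝ (Fin n)) =
      InnerProductSpace.rankOne ℝ (WithLp.toLp 2 u) (WithLp.toLp 2 v) := by
    ext1 x; rfl
  rw [hcoe, InnerProductSpace.norm_rankOne, evNorm_eq_norm, evNorm_eq_norm]

end Norms

section Dynamics

variable {n : ℕ}

lemma evNorm_mulVec_sub_mulVec_le (A A₀ : Matrix (Fin n) (Fin n) ℝ) (x x' : Fin n → ℝ) :
    evNorm (A *ᵥ x - A₀ *ᵥ x') ≤ specNorm A₀ * evNorm (x - x') + specNorm (A - A₀) * evNorm x := by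
  have hsplit : A *ᵥ x - A₀ *ᵥ x' = A₀ *ᵥ (x - x') + (A - A₀) *ᵥ x := by
    rw [mulVec_sub, sub_mulVec]; abel
  calc evNorm (A *ᵥ x - A₀ *ᵥ x')
      ≤ evNorm (A₀ *ᵥ (x - x')) + evNorm ((A - A₀) *ᵥ x) := by
        simpa only [hsplit, evNorm_eq_norm, WithLp.toLp_add] using norm_add_le _ _
    _ ≤ _ := add_le_add (evNorm_mulVec_le _ _) (evNorm_mulVec_le _ _)

lemma specNorm_sub_smul_vecMulVec_le (E H : Matrix (Fin n) (Fin n) ℝ) (α : ℝ)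
    (u v : Fin n → ℝ) :
    specNorm (E - α • (H * vecMulVec u v * H ^ 2)) ≤
      specNorm E + |α| * specNorm H ^ 3 * (evNorm u * evNorm v) := by
  calc specNorm (E - α • (H * vecMulVec u v * H ^ 2))
      ≤ specNorm E + |α| * (specNorm H * specNorm (vecMulVec u v) * specNorm H ^ 2) := by
        simp only [specNorm_eq_norm]
        grw [norm_sub_le, norm_smul, Real.norm_eq_abs, norm_mul_le, norm_mul_le,
          norm_pow_le' _ two_pos]
    _ = _ := by rw [specNorm_vecMulVec]; ring

end Dynamics

theorem coupled_recursion_linear_bound {a c γ B M : ℝ} {K : ℕ} {d e β : ℕ → ℝ}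
    (ha : 0 ≤ a) (hc : 0 ≤ c) (hγ : 0 ≤ γ) (hβ_nonneg : ∀ k, 0 ≤ β k)
    (hd0 : d 0 = 0) (he0 : e 0 = 0) (hβ : ∀ k, β k ≤ B + d k)
    (hd : ∀ k, d (k + 1) ≤ a * d k + e k * β k)
    (he : ∀ k, e (k + 1) ≤ e k + γ * β (k + 1) * β k)
    (hM : B + c * K ≤ M) (hbal : γ * M ^ 3 ≤ (1 - a) * c) :
    ∀ k ≤ K, d k ≤ c * k ∧ e k ≤ γ * M ^ 2 * k := by
  have hβM : ∀ k ≤ K, d k ≤ c * k → β k ≤ M := fun k hk hdk => by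
    have : c * k ≤ c * K := by gcongr
    linarith [hβ k]
  intro k
  induction k with
  | zero => simp [hd0, he0]
  | succ k ih =>
    intro hk
    obtain ⟨hdk, hek⟩ := ih (by omega)
    have hβk := hβM k (by omega) hdk
    have hM0 : 0 ≤ M := (hβ_nonneg k).trans hβk
    have hdk1 : d (k + 1) ≤ c * ↑(k + 1) := by
      have hk0 : (0 : ℝ) ≤ k := k.cast_nonneg
      calc d (k + 1) ≤ a * (c * k) + γ * M ^ 2 * k * M := by
            grw [hd k, hdk, hek, hβk]
            exact hβ_nonneg k
        _ ≤ c * ↑(k + 1) := by push_cast; nlinarith [mul_le_mul_of_nonneg_right hbal hk0]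
    refine ⟨hdk1, ?_⟩
    have hβk1 := hβM (k + 1) hk hdk1
    calc e (k + 1) ≤ γ * M ^ 2 * k + γ * M * M := by
          grw [he k, hek, hβk1, hβk]
          exact hβ_nonneg k
      _ = γ * M ^ 2 * ↑(k + 1) := by push_cast; ring

lemma balance_of_le_threshold {R α a h B : ℝ} (hR : 0 < R) (hα : 0 < α) (hB : 0 < B)
    (hh : 0 ≤ h) (hRle : R ≤ 4 / 27 * (1 - a) / (h ^ 3 * B ^ 2) - α) :
    α * h ^ 3 * (3 / 2 * B) ^ 3 ≤ (1 - a) * (α * B / (2 * R)) := by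
  have hh : 0 < h := by
    rcases hh.eq_or_lt with rfl | hh
    · norm_num at hRle; linarith
    · exact hh
  have key : 27 / 4 * R * (h ^ 3 * B ^ 2) ≤ 1 - a := by
    rw [le_sub_iff_add_le, le_div_iff₀ (by positivity)] at hRle
    nlinarith [mul_pos hα (pow_pos hh 3), pow_pos hB 2]
  rw [mul_div_assoc', le_div_iff₀ (by positivity)]
  calc α * h ^ 3 * (3 / 2 * B) ^ 3 * (2 * R) = α * B * (27 / 4 * R * (h ^ 3 * B ^ 2)) := by ring
    _ ≤ α * B * (1 - a) := by gcongr
    _ = (1 - a) * (α * B) := by ring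

theorem lodo_deviation_linear_bound_general
    (n : ℕ) (t₀ : ℕ) (α : ℝ) (hα : 0 < α)
    (H : Matrix (Fin n) (Fin n) ℝ) (s : ℕ → (Fin n → ℝ))
    (bmax : ℝ) (hbmax : 0 < bmax)
    (A A' : ℕ → Matrix (Fin n) (Fin n) ℝ) (b b' : ℕ → (Fin n → ℝ))
    (hb0 : b t₀ = 0)
    (hbrec : ∀ t, t₀ ≤ t → b (t + 1) = A t *ᵥ b t - s t)
    (hArec : ∀ t, t₀ ≤ t →
      A (t + 1) = A t - α • (H * vecMulVec (b (t + 1)) (b t) * H ^ 2))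
    (hA'0 : A' t₀ = A t₀) (hb'0 : b' t₀ = 0)
    (hb'rec : ∀ t, t₀ ≤ t → b' (t + 1) = A' t₀ *ᵥ b' t - s t)
    (hb'bound : ∀ t, t₀ ≤ t → evNorm (b' t) ≤ bmax) :
    ∀ R : ℝ, 0 < R →
      R ≤ 4 / 27 * (1 - specNorm (A' t₀)) / (specNorm H ^ 3 * bmax ^ 2) - α →
      ∀ Δt : ℕ, (Δt : ℝ) ≤ R / α →
        epsB t₀ b b' Δt ≤ α * bmax / (2 * R) * Δt := by
  intro R hR hRle Δt hΔt
  have hM : bmax + α * bmax / (2 * R) * Δt ≤ 3 / 2 * bmax := by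
    grw [hΔt]
    exact le_of_eq (by field_simp; ring)
  have hlin := coupled_recursion_linear_bound (K := Δt)
    (d := fun k => evNorm (b (t₀ + k) - b' (t₀ + k)))
    (e := fun k => specNorm (A (t₀ + k) - A' t₀)) (β := fun k => evNorm (b (t₀ + k)))
    (specNorm_nonneg _) (by positivity) (by have := specNorm_nonneg H; positivity)
    (fun _ => evNorm_nonneg _)
    (by simp [hb0, hb'0, evNorm]) (by simp [hA'0, specNorm])
    (fun k => by grw [evNorm_le_add_evNorm_sub _ (b' (t₀ + k)), hb'bound _ (by omega)])
    (fun k => by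
      rw [← add_assoc, hbrec _ (by omega), hb'rec _ (by omega), sub_sub_sub_cancel_right]
      exact evNorm_mulVec_sub_mulVec_le _ _ _ _)
    (fun k => by
      rw [← add_assoc, hArec _ (by omega), sub_right_comm]
      refine (specNorm_sub_smul_vecMulVec_le _ _ _ _ _).trans_eq ?_
      rw [abs_of_pos hα]; ring)
    hM (balance_of_le_threshold hR hα hbmax (specNorm_nonneg H) hRle)
  refine Finset.sup'_le _ _ fun τ hτ => ?_
  obtain ⟨k, rfl⟩ : ∃ k, τ = t₀ + k := ⟨τ - t₀, by grind⟩
  have hk : k ≤ Δt := by grind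
  grw [(hlin k hk).1, hk]

/-- Linear-in-time deviation bound over a trajectory of length
`R/α`. -/
theorem lodo_deviation_linear_bound
    (n : ℕ) (hn : 1 ≤ n) (t₀ : ℕ) (α : ℝ) (hα : 0 < α)
    (H : Matrix (Fin n) (Fin n) ℝ) (s : ℕ → (Fin n → ℝ))
    (bmax : ℝ) (hbmax : 0 < bmax)
    (A A' : ℕ → Matrix (Fin n) (Fin n) ℝ) (b b' : ℕ → (Fin n → ℝ))
    (hb0 : b t₀ = 0)
    (hbrec : ∀ t, t₀ ≤ t → b (t + 1) = A t *ᵥ b t - s t)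
    (hArec : ∀ t, t₀ ≤ t →
      A (t + 1) = A t - α • (H * vecMulVec (b (t + 1)) (b t) * H ^ 2))
    (hA'0 : A' t₀ = A t₀) (hb'0 : b' t₀ = 0)
    (hb'rec : ∀ t, t₀ ≤ t → b' (t + 1) = A' t₀ *ᵥ b' t - s t)
    (hA'rec : ∀ t, t₀ ≤ t →
      A' (t + 1) = A' t - α • (H * vecMulVec (b' (t + 1)) (b' t) * H ^ 2))
    (hAnorm : specNorm (A' t₀) < 1)
    (hb'bound : ∀ t, t₀ ≤ t → evNorm (b' t) ≤ bmax) :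
    ∀ R : ℝ, 0 < R →
      R ≤ 4 / 27 * (1 - specNorm (A' t₀)) / (specNorm H ^ 3 * bmax ^ 2) - α →
      ∀ Δt : ℕ, (Δt : ℝ) ≤ R / α →
        epsB t₀ b b' Δt ≤ α * bmax / (2 * R) * Δt :=
  lodo_deviation_linear_bound_general n t₀ α hα H s bmax hbmax A A' b b' hb0 hbrec hArec hA'0 hb'0
    hb'rec hb'bound
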